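/- Singleton Bound for the sum-rank metric: let C ⊆ Π be a code with |C| ≥ 2 and minimum sum-rank distance d. Let j and δ be the unique integers satisfying d − 1 = Σ_{i=1}^{j−1} n_i + δ with 0 ≤ δ ≤ n_j − 1. Then |C| ≤ q^{Σ_{i=j}^t m_i n_i − m_j δ}. In particular if m_1 = ... = m_t = m then |C| ≤ q^{m(N−d+1)}. -/

import Mathlib

/-!
Delete the first `d - 1` rows of the stacked matrix: all rows of the blocks `i < j` and the first
`δ` rows of block `j`. Two codewords agreeing on the remaining entries differ by a tuple supported
on `d - 1` rows, hence of sum-rank at most `d - 1`, so they coincide. The deletion is therefore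
injective on `C`, and `C` has at most `q ^ (m j * (n j - δ) + ∑_{i>j} m i * n i)` elements.
-/

open Matrix Finset

/-- The sum-rank of a tuple of matrices. -/
noncomputable def srk {Fq : Type*} [Field Fq] {t : ℕ} {n m : Fin t → ℕ}
    (X : ∀ i, Matrix (Fin (n i)) (Fin (m i)) Fq) : ℕ :=
  ∑ i, (X i).rank

theorem Finset.sum_univ_eq_sum_Iio_add_add_sum_Ioi {ι M : Type*} [LinearOrder ι] [Fintype ι]
    [LocallyFiniteOrderBot ι] [LocallyFiniteOrderTop ι] [AddCommMonoid M] (f : ι → M) (j : ι) :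
    ∑ i, f i = ∑ i ∈ Iio j, f i + (f j + ∑ i ∈ Ioi j, f i) := by
  classical
  rw [← sum_filter_add_sum_filter_not univ (· < j)]
  congr 1
  · exact sum_congr (by ext; simp) fun _ _ => rfl
  · rw [← sum_insert (f := f) (by simp : j ∉ Ioi j), Ioi_insert]
    exact sum_congr (by ext; simp) fun _ _ => rfl

theorem Matrix.rank_eq_zero_iff {K m n : Type*} [Field K] [Fintype n] (A : Matrix m n K) :
    A.rank = 0 ↔ A = 0 := by
  classical
  rw [Matrix.rank, Submodule.finrank_eq_zero, LinearMap.range_eq_bot, ← Matrix.toLin'_apply',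
    LinearEquiv.map_eq_zero_iff]

theorem Matrix.rank_le_of_row_eq_zero {R : Type*} [CommRing R] [StrongRankCondition R]
    {N M : ℕ} (A : Matrix (Fin N) (Fin M) R) (k : ℕ) (h : ∀ r : Fin N, k ≤ r → A r = 0) :
    A.rank ≤ k := by
  refine (A.rank_le_card_of_support_subset {r | (r : ℕ) < k} fun r hr => ?_).trans ?_
  · by_contra hrk
    exact hr (h r (not_lt.1 (by simpa using hrk)))
  · exact Fin.card_filter_val_lt.trans_le (min_le_right _ _)

section SumRank

variable {K : Type*} [Field K] {t : ℕ} {n m : Fin t → ℕ}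

theorem srk_eq_zero_iff (X : ∀ i, Matrix (Fin (n i)) (Fin (m i)) K) : srk X = 0 ↔ X = 0 := by
  simp only [srk, sum_eq_zero_iff, mem_univ, true_implies, Matrix.rank_eq_zero_iff, funext_iff,
    Pi.zero_apply]

theorem srk_le_of_row_eq_zero (k : Fin t → ℕ) (X : ∀ i, Matrix (Fin (n i)) (Fin (m i)) K)
    (h : ∀ i (r : Fin (n i)), k i ≤ r → X i r = 0) : srk X ≤ ∑ i, k i :=
  sum_le_sum fun i _ => (X i).rank_le_of_row_eq_zero (k i) (h i)

def puncture (k : Fin t → ℕ) (X : ∀ i, Matrix (Fin (n i)) (Fin (m i)) K) :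
    (Σ i, Fin (n i - k i) × Fin (m i)) → K :=
  fun p => X p.1 ⟨k p.1 + p.2.1, by omega⟩ p.2.2

theorem srk_sub_le_of_puncture_eq (k : Fin t → ℕ) {X Y : ∀ i, Matrix (Fin (n i)) (Fin (m i)) K}
    (h : puncture k X = puncture k Y) : srk (X - Y) ≤ ∑ i, k i := by
  refine srk_le_of_row_eq_zero k _ fun i r hr => funext fun c => sub_eq_zero.2 ?_
  have := congrFun h ⟨i, ⟨r - k i, by omega⟩, c⟩
  simpa [puncture, Nat.add_sub_cancel' hr] using this

theorem card_le_pow_of_sum_lt_srk [Fintype K] (C : Finset (∀ i, Matrix (Fin (n i)) (Fin (m i)) K))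
    (k : Fin t → ℕ) (hk : ∀ X ∈ C, ∀ Y ∈ C, X ≠ Y → ∑ i, k i < srk (X - Y)) :
    C.card ≤ Fintype.card K ^ ∑ i, m i * (n i - k i) := by
  calc C.card ≤ Fintype.card ((Σ i, Fin (n i - k i) × Fin (m i)) → K) :=
        card_le_card_of_injOn (puncture k) (fun _ _ => mem_univ _) fun X hX Y hY hXY => by
          by_contra hne
          exact (hk X hX Y hY hne).not_ge (srk_sub_le_of_puncture_eq k hXY)
    _ = Fintype.card K ^ ∑ i, m i * (n i - k i) := by
        simp [Fintype.card_sigma, mul_comm]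

end SumRank

section LeadingRows

variable {t : ℕ} (n : Fin t → ℕ) (j : Fin t) (δ : ℕ)

/-- Row counts per block of the first `∑_{i<j} n i + δ` rows of the stacked matrix. -/
def leadingRows : Fin t → ℕ := fun i => if i < j then n i else if i = j then δ else 0

variable {n j δ} in
theorem leadingRows_of_lt {i : Fin t} (hi : i < j) : leadingRows n j δ i = n i := if_pos hi

@[simp]
theorem leadingRows_self : leadingRows n j δ j = δ := by simp [leadingRows]

variable {n j δ} in
theorem leadingRows_of_gt {i : Fin t} (hi : j < i) : leadingRows n j δ i = 0 := by
  simp [leadingRows, hi.not_gt, hi.ne']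

theorem sum_leadingRows : ∑ i, leadingRows n j δ i = ∑ i ∈ Iio j, n i + δ := by
  rw [sum_univ_eq_sum_Iio_add_add_sum_Ioi _ j, leadingRows_self,
    sum_congr rfl fun i hi => leadingRows_of_lt (mem_Iio.1 hi),
    sum_eq_zero fun i hi => leadingRows_of_gt (mem_Ioi.1 hi), add_zero]

theorem sum_sub_leadingRows_mul (m : Fin t → ℕ) :
    ∑ i, m i * (n i - leadingRows n j δ i) = m j * (n j - δ) + ∑ i ∈ Ioi j, m i * n i := by
  rw [sum_univ_eq_sum_Iio_add_add_sum_Ioi _ j, leadingRows_self,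
    sum_eq_zero fun i hi => by rw [leadingRows_of_lt (mem_Iio.1 hi), Nat.sub_self, mul_zero],
    sum_congr rfl fun i hi => by rw [leadingRows_of_gt (mem_Ioi.1 hi), Nat.sub_zero], zero_add]

end LeadingRows

theorem singleton_bound_general (Fq : Type) [Field Fq] [Fintype Fq]
    (t : ℕ) (n m : Fin t → ℕ)
    (C : Finset (∀ i, Matrix (Fin (n i)) (Fin (m i)) Fq))
    (d : ℕ)
    (hd : IsLeast {e | ∃ X ∈ C, ∃ Y ∈ C, X ≠ Y ∧ srk (X - Y) = e} d)
    (j : Fin t) (δ : ℕ) (hδ : δ ≤ n j - 1)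
    (hdj : d - 1 = (∑ i ∈ Finset.Iio j, n i) + δ) :
    C.card ≤ (Fintype.card Fq) ^ ((∑ i ∈ Finset.Ici j, m i * n i) - m j * δ) ∧
    ∀ M : ℕ, (∀ i, m i = M) →
      C.card ≤ (Fintype.card Fq) ^ (M * ((∑ i, n i) - d + 1)) := by
  obtain ⟨⟨X₀, -, Y₀, -, hne₀, hd₀⟩, hd_le⟩ := hd
  have hd_pos : 0 < d := by
    rw [← hd₀]
    exact Nat.pos_of_ne_zero ((srk_eq_zero_iff _).not.2 (sub_ne_zero.2 hne₀))
  have hcard := card_le_pow_of_sum_lt_srk C (leadingRows n j δ) fun X hX Y hY hXY => by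
    have hsrk := hd_le ⟨X, hX, Y, hY, hXY, rfl⟩
    rw [sum_leadingRows]
    omega
  rw [sum_sub_leadingRows_mul] at hcard
  have hq : 0 < Fintype.card Fq := Fintype.card_pos
  refine ⟨hcard.trans (Nat.pow_le_pow_right hq ?_),
    fun M hM => hcard.trans (Nat.pow_le_pow_right hq ?_)⟩
  · have hδn : m j * δ ≤ m j * n j := Nat.mul_le_mul_left _ (by omega)
    rw [← Ioi_insert, sum_insert (by simp), Nat.mul_sub]
    omega
  · simp only [hM, ← mul_sum, ← mul_add]
    refine Nat.mul_le_mul_left M ?_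
    rw [sum_univ_eq_sum_Iio_add_add_sum_Ioi n j]
    omega

/-- Singleton bound for the sum-rank metric. If `C ⊆ Π` has `|C| ≥ 2` and
minimum sum-rank distance `d`, and `d - 1 = Σ_{i<j} n_i + δ` with `0 ≤ δ ≤ n_j - 1`,
then `|C| ≤ q^{Σ_{i≥j} m_i n_i - m_j δ}`. In particular if all `m_i = M` then
`|C| ≤ q^{M (N - d + 1)}`. -/
theorem singleton_bound (Fq : Type) [Field Fq] [Fintype Fq]
    (t : ℕ) (n m : Fin t → ℕ) (hnm : ∀ i, 1 ≤ n i ∧ n i ≤ m i)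
    (hmono : ∀ i j : Fin t, i ≤ j → m j ≤ m i)
    (C : Finset (∀ i, Matrix (Fin (n i)) (Fin (m i)) Fq)) (hC : 2 ≤ C.card)
    (d : ℕ)
    (hd : IsLeast {e | ∃ X ∈ C, ∃ Y ∈ C, X ≠ Y ∧ srk (X - Y) = e} d)
    (j : Fin t) (δ : ℕ) (hδ : δ ≤ n j - 1)
    (hdj : d - 1 = (∑ i ∈ Finset.Iio j, n i) + δ) :
    C.card ≤ (Fintype.card Fq) ^ ((∑ i ∈ Finset.Ici j, m i * n i) - m j * δ) ∧
    ∀ M : ℕ, (∀ i, m i = M) →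
      C.card ≤ (Fintype.card Fq) ^ (M * ((∑ i, n i) - d + 1)) :=
  singleton_bound_general Fq t n m C d hd j δ hδ hdj
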